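/- arXiv:2512.05889 — 5 statements merged into one kernel-verified Lean document; each statement's English description precedes it below -/
import Mathlib

section
/- Let t₀ ∈ ℝ, ν > 0, D ≥ 0, δ ≥ 0, S₀ ≥ 0, R₀ ≥ 0, I₀ > 0, T > 0. Let τ : [t₀, t₀+T] → [0,∞) be continuous and bounded, let β : [0,∞) → [0,1] be continuous, set Γ(a) = e^{−(ν+D)a} β(a), let p : [0,∞) → [0,∞) be integrable with ∫₀^∞ p(a) da = 1, and for κ > 0 define Λ_κ(t) = I₀ e^{−(ν+D)(t−t₀)} ∫₀^∞ β(a+(t−t₀)) κ p(κ a) da. Suppose for each κ > 0, N_κ : [t₀, t₀+T] → ℝ is continuous with sup_t |N_κ(t)| ≤ C for a constant C independent of κ, satisfies N_κ(t) = τ(t) F(N_κ)(t) [ Λ_κ(t) + ∫_{0}^{t−t₀} Γ(a) N_κ(t−a) da ] for all t, and suppose N_κ converges uniformly on [t₀, t₀+T] to a function A as κ → ∞. Then A is continuous and satisfies A(t) = τ(t) F(A)(t) [ I₀ Γ(t−t₀) + ∫_{0}^{t−t₀} Γ(a) A(t−a) da ] for all t ∈ [t₀, t₀+T]. -/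
open MeasureTheory Set Filter Real

/-- The operator `F` sending a candidate flow of new infections `x` to the corresponding
number of susceptibles. -/
noncomputable def Fop (t₀ ν D δ S₀ R₀ I₀ : ℝ) (x : ℝ → ℝ) (t : ℝ) : ℝ :=
  S₀ - ∫ m in t₀..t,
    (x m - δ * (Real.exp (-δ * (m - t₀)) * R₀ +
      ν * ∫ σ in t₀..m, Real.exp (-δ * (m - σ)) *
        (Real.exp (-(ν + D) * (σ - t₀)) * I₀ +
          ∫ a in (0 : ℝ)..(σ - t₀), Real.exp (-(ν + D) * a) * x (σ - a))))

/-- `Γ(a) = e^{−(ν+D)a} β(a)`. -/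
noncomputable def Gam (ν D : ℝ) (β : ℝ → ℝ) (a : ℝ) : ℝ :=
  Real.exp (-(ν + D) * a) * β a

/-- `Λ_κ(t) = I₀ e^{−(ν+D)(t−t₀)} ∫₀^∞ β(a+(t−t₀)) κ p(κ a) da`. -/
noncomputable def Lam (t₀ ν D I₀ : ℝ) (β p : ℝ → ℝ) (κ t : ℝ) : ℝ :=
  I₀ * Real.exp (-(ν + D) * (t - t₀)) *
    ∫ a in Ioi (0 : ℝ), β (a + (t - t₀)) * (κ * p (κ * a))

open Topology

/-- Splitting the exponential in a convolution-type interval integral. -/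
lemma exp_split (t₀ b d : ℝ) (g : ℝ → ℝ) :
    (∫ σ in t₀..b, Real.exp (-d * (b - σ)) * g σ)
      = Real.exp (-d * b) * ∫ σ in t₀..b, Real.exp (d * σ) * g σ := by
  rw [← intervalIntegral.integral_const_mul]
  apply intervalIntegral.integral_congr
  intro σ _
  dsimp only
  rw [← mul_assoc, ← Real.exp_add]
  congr 2
  ring

/-- Substitution `u = σ - a` in the inner integral. -/
lemma inner_subst (t₀ c σ : ℝ) (x : ℝ → ℝ) :
    (∫ a in (0:ℝ)..(σ - t₀), Real.exp (-c * a) * x (σ - a))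
      = ∫ u in t₀..σ, Real.exp (-c * (σ - u)) * x u := by
  have h1 : (∫ a in (0:ℝ)..(σ - t₀), Real.exp (-c * a) * x (σ - a))
      = ∫ a in (0:ℝ)..(σ - t₀), (fun u => Real.exp (-c * (σ - u)) * x u) (σ - a) := by
    apply intervalIntegral.integral_congr
    intro a _
    simp only [sub_sub_cancel]
  have h2 := intervalIntegral.integral_comp_sub_left (a := 0) (b := σ - t₀)
    (fun u => Real.exp (-c * (σ - u)) * x u) σ
  rw [sub_sub_cancel, sub_zero] at h2
  rw [h1]
  exact h2

/-- Continuity of the inner integral as a function of the upper parameter. -/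
lemma inner_cont (t₀ T c : ℝ) (hT : t₀ ≤ t₀ + T) (x : ℝ → ℝ)
    (hx : ContinuousOn x (Icc t₀ (t₀ + T))) :
    ContinuousOn (fun σ => ∫ a in (0:ℝ)..(σ - t₀), Real.exp (-c * a) * x (σ - a))
      (Icc t₀ (t₀ + T)) := by
  have key : ∀ σ : ℝ, (∫ a in (0:ℝ)..(σ - t₀), Real.exp (-c * a) * x (σ - a))
      = Real.exp (-c * σ) * ∫ u in t₀..σ, Real.exp (c * u) * x u := by
    intro σ
    rw [inner_subst, exp_split]
  simp only [key]
  apply ContinuousOn.mul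
  · exact (Real.continuous_exp.comp (continuous_const.mul continuous_id)).continuousOn
  · have hint : IntegrableOn (fun u => Real.exp (c * u) * x u) (uIcc t₀ (t₀ + T)) := by
      rw [uIcc_of_le hT]
      exact (((Real.continuous_exp.comp (continuous_const.mul continuous_id)).continuousOn).mul
        hx).integrableOn_Icc
    have := intervalIntegral.continuousOn_primitive_interval (a := t₀) (b := t₀ + T)
      (μ := volume) hint
    rwa [uIcc_of_le hT] at this

noncomputable def innerInt (t₀ c : ℝ) (x : ℝ → ℝ) (σ : ℝ) : ℝ :=
  ∫ a in (0:ℝ)..(σ - t₀), Real.exp (-c * a) * x (σ - a)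

noncomputable def midInt (t₀ c d I₀ : ℝ) (x : ℝ → ℝ) (m : ℝ) : ℝ :=
  ∫ σ in t₀..m, Real.exp (-d * (m - σ)) * (Real.exp (-c * (σ - t₀)) * I₀ + innerInt t₀ c x σ)

lemma Fop_eq (t₀ ν D δ S₀ R₀ I₀ : ℝ) (x : ℝ → ℝ) (t : ℝ) :
    Fop t₀ ν D δ S₀ R₀ I₀ x t
      = S₀ - ∫ m in t₀..t,
          (x m - δ * (Real.exp (-δ * (m - t₀)) * R₀ + ν * midInt t₀ (ν + D) δ I₀ x m)) := rfl

lemma innerInt_cont (t₀ T c : ℝ) (hT : t₀ ≤ t₀ + T) (x : ℝ → ℝ)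
    (hx : ContinuousOn x (Icc t₀ (t₀ + T))) :
    ContinuousOn (innerInt t₀ c x) (Icc t₀ (t₀ + T)) :=
  inner_cont t₀ T c hT x hx

lemma innerInt_intble (t₀ T c σ : ℝ) (x : ℝ → ℝ)
    (hx : ContinuousOn x (Icc t₀ (t₀ + T))) (hσ : σ ∈ Icc t₀ (t₀ + T)) :
    IntervalIntegrable (fun a => Real.exp (-c * a) * x (σ - a)) volume 0 (σ - t₀) := by
  apply ContinuousOn.intervalIntegrable
  have h0 : (0:ℝ) ≤ σ - t₀ := by linarith [hσ.1]
  rw [uIcc_of_le h0]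
  apply ContinuousOn.mul
  · exact (Real.continuous_exp.comp (continuous_const.mul continuous_id)).continuousOn
  · apply hx.comp (continuous_const.sub continuous_id).continuousOn
    intro a ha
    simp only [id_eq, mem_Icc, Pi.sub_apply] at *
    constructor
    · linarith [ha.2]
    · linarith [ha.1, hσ.2]

lemma innerInt_bound (t₀ T c η : ℝ) (hc : 0 ≤ c) (hη : 0 ≤ η) (x y : ℝ → ℝ)
    (hx : ContinuousOn x (Icc t₀ (t₀ + T))) (hy : ContinuousOn y (Icc t₀ (t₀ + T)))
    (hdiff : ∀ s ∈ Icc t₀ (t₀ + T), |x s - y s| ≤ η)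
    (σ : ℝ) (hσ : σ ∈ Icc t₀ (t₀ + T)) :
    |innerInt t₀ c x σ - innerInt t₀ c y σ| ≤ η * T := by
  have h0 : (0:ℝ) ≤ σ - t₀ := by linarith [hσ.1]
  unfold innerInt
  rw [← intervalIntegral.integral_sub (innerInt_intble t₀ T c σ x hx hσ)
    (innerInt_intble t₀ T c σ y hy hσ)]
  have hb : ∀ a ∈ Set.uIoc (0:ℝ) (σ - t₀),
      ‖Real.exp (-c * a) * x (σ - a) - Real.exp (-c * a) * y (σ - a)‖ ≤ η := by
    intro a ha
    rw [uIoc_of_le h0] at ha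
    rw [← mul_sub, Real.norm_eq_abs, abs_mul, Real.abs_exp]
    have he : Real.exp (-c * a) ≤ 1 := by
      rw [Real.exp_le_one_iff]
      nlinarith [ha.1]
    have hmem : σ - a ∈ Icc t₀ (t₀ + T) := by
      simp only [id_eq, mem_Icc] at *
      constructor
      · linarith [ha.2]
      · linarith [ha.1, hσ.2]
    calc Real.exp (-c * a) * |x (σ - a) - y (σ - a)| ≤ 1 * η :=
          mul_le_mul he (hdiff _ hmem) (abs_nonneg _) zero_le_one
      _ = η := one_mul η
  calc ‖∫ a in (0:ℝ)..(σ - t₀), (Real.exp (-c * a) * x (σ - a) - Real.exp (-c * a) * y (σ - a))‖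
        ≤ η * |σ - t₀ - 0| := intervalIntegral.norm_integral_le_of_norm_le_const hb
    _ ≤ η * T := by
        rw [sub_zero, abs_of_nonneg h0]
        exact mul_le_mul_of_nonneg_left (by linarith [hσ.2]) hη

lemma midInt_integrand_cont (t₀ T c d I₀ m : ℝ) (hT : t₀ ≤ t₀ + T) (x : ℝ → ℝ)
    (hx : ContinuousOn x (Icc t₀ (t₀ + T))) (hm : m ∈ Icc t₀ (t₀ + T)) :
    ContinuousOn
      (fun σ => Real.exp (-d * (m - σ)) * (Real.exp (-c * (σ - t₀)) * I₀ + innerInt t₀ c x σ))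
      (Icc t₀ m) := by
  have hsub : Icc t₀ m ⊆ Icc t₀ (t₀ + T) := Icc_subset_Icc le_rfl hm.2
  apply ContinuousOn.mul
  · exact (Real.continuous_exp.comp (continuous_const.mul
      (continuous_const.sub continuous_id))).continuousOn
  · exact (((Real.continuous_exp.comp (continuous_const.mul
      (continuous_id.sub continuous_const))).continuousOn).mul continuousOn_const).add
      ((innerInt_cont t₀ T c hT x hx).mono hsub)

lemma midInt_intble (t₀ T c d I₀ m : ℝ) (hT : t₀ ≤ t₀ + T) (x : ℝ → ℝ)
    (hx : ContinuousOn x (Icc t₀ (t₀ + T))) (hm : m ∈ Icc t₀ (t₀ + T)) :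
    IntervalIntegrable
      (fun σ => Real.exp (-d * (m - σ)) * (Real.exp (-c * (σ - t₀)) * I₀ + innerInt t₀ c x σ))
      volume t₀ m := by
  apply ContinuousOn.intervalIntegrable
  rw [uIcc_of_le hm.1]
  exact midInt_integrand_cont t₀ T c d I₀ m hT x hx hm

lemma midInt_cont (t₀ T c d I₀ : ℝ) (hT : t₀ ≤ t₀ + T) (x : ℝ → ℝ)
    (hx : ContinuousOn x (Icc t₀ (t₀ + T))) :
    ContinuousOn (midInt t₀ c d I₀ x) (Icc t₀ (t₀ + T)) := by
  have key : ∀ m : ℝ, midInt t₀ c d I₀ x m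
      = Real.exp (-d * m) * ∫ σ in t₀..m,
          Real.exp (d * σ) * (Real.exp (-c * (σ - t₀)) * I₀ + innerInt t₀ c x σ) := by
    intro m
    exact exp_split t₀ m d _
  rw [show midInt t₀ c d I₀ x = (fun m => Real.exp (-d * m) * ∫ σ in t₀..m,
      Real.exp (d * σ) * (Real.exp (-c * (σ - t₀)) * I₀ + innerInt t₀ c x σ)) from funext key]
  apply ContinuousOn.mul
  · exact (Real.continuous_exp.comp (continuous_const.mul continuous_id)).continuousOn
  · have hint : IntegrableOn
        (fun σ => Real.exp (d * σ) * (Real.exp (-c * (σ - t₀)) * I₀ + innerInt t₀ c x σ))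
        (uIcc t₀ (t₀ + T)) := by
      rw [uIcc_of_le hT]
      apply ContinuousOn.integrableOn_Icc
      apply ContinuousOn.mul
      · exact (Real.continuous_exp.comp (continuous_const.mul continuous_id)).continuousOn
      · exact (((Real.continuous_exp.comp (continuous_const.mul
          (continuous_id.sub continuous_const))).continuousOn).mul continuousOn_const).add
          (innerInt_cont t₀ T c hT x hx)
    have := intervalIntegral.continuousOn_primitive_interval (a := t₀) (b := t₀ + T)
      (μ := volume) hint
    rwa [uIcc_of_le hT] at this

lemma midInt_bound (t₀ T c d I₀ η : ℝ) (hc : 0 ≤ c) (hd : 0 ≤ d) (hη : 0 ≤ η) (hT : 0 ≤ T)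
    (x y : ℝ → ℝ)
    (hx : ContinuousOn x (Icc t₀ (t₀ + T))) (hy : ContinuousOn y (Icc t₀ (t₀ + T)))
    (hdiff : ∀ s ∈ Icc t₀ (t₀ + T), |x s - y s| ≤ η)
    (m : ℝ) (hm : m ∈ Icc t₀ (t₀ + T)) :
    |midInt t₀ c d I₀ x m - midInt t₀ c d I₀ y m| ≤ η * T * T := by
  have hT' : t₀ ≤ t₀ + T := by linarith
  have h0 : t₀ ≤ m := hm.1
  unfold midInt
  rw [← intervalIntegral.integral_sub (midInt_intble t₀ T c d I₀ m hT' x hx hm)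
    (midInt_intble t₀ T c d I₀ m hT' y hy hm)]
  have hb : ∀ σ ∈ Set.uIoc t₀ m,
      ‖Real.exp (-d * (m - σ)) * (Real.exp (-c * (σ - t₀)) * I₀ + innerInt t₀ c x σ)
        - Real.exp (-d * (m - σ)) * (Real.exp (-c * (σ - t₀)) * I₀ + innerInt t₀ c y σ)‖
        ≤ η * T := by
    intro σ hσ
    rw [uIoc_of_le h0] at hσ
    have hσJ : σ ∈ Icc t₀ (t₀ + T) := ⟨hσ.1.le, le_trans hσ.2 hm.2⟩
    have heq : Real.exp (-d * (m - σ)) * (Real.exp (-c * (σ - t₀)) * I₀ + innerInt t₀ c x σ)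
        - Real.exp (-d * (m - σ)) * (Real.exp (-c * (σ - t₀)) * I₀ + innerInt t₀ c y σ)
        = Real.exp (-d * (m - σ)) * (innerInt t₀ c x σ - innerInt t₀ c y σ) := by ring
    rw [heq, Real.norm_eq_abs, abs_mul, Real.abs_exp]
    have he : Real.exp (-d * (m - σ)) ≤ 1 := by
      rw [Real.exp_le_one_iff]
      nlinarith [hσ.2]
    calc Real.exp (-d * (m - σ)) * |innerInt t₀ c x σ - innerInt t₀ c y σ|
        ≤ 1 * (η * T) := mul_le_mul he
          (innerInt_bound t₀ T c η hc hη x y hx hy hdiff σ hσJ) (abs_nonneg _) zero_le_one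
      _ = η * T := one_mul _
  calc ‖∫ σ in t₀..m, (Real.exp (-d * (m - σ)) * (Real.exp (-c * (σ - t₀)) * I₀ + innerInt t₀ c x σ)
        - Real.exp (-d * (m - σ)) * (Real.exp (-c * (σ - t₀)) * I₀ + innerInt t₀ c y σ))‖
        ≤ η * T * |m - t₀| := intervalIntegral.norm_integral_le_of_norm_le_const hb
    _ ≤ η * T * T := by
        rw [abs_of_nonneg (by linarith)]
        exact mul_le_mul_of_nonneg_left (by linarith [hm.2]) (by positivity)

lemma fop_integrand_intble (t₀ ν D δ R₀ I₀ T t : ℝ) (hT : t₀ ≤ t₀ + T) (x : ℝ → ℝ)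
    (hx : ContinuousOn x (Icc t₀ (t₀ + T))) (ht : t ∈ Icc t₀ (t₀ + T)) :
    IntervalIntegrable
      (fun m => x m - δ * (Real.exp (-δ * (m - t₀)) * R₀ + ν * midInt t₀ (ν + D) δ I₀ x m))
      volume t₀ t := by
  apply ContinuousOn.intervalIntegrable
  rw [uIcc_of_le ht.1]
  have hsub : Icc t₀ t ⊆ Icc t₀ (t₀ + T) := Icc_subset_Icc le_rfl ht.2
  apply ContinuousOn.sub (hx.mono hsub)
  apply ContinuousOn.mul continuousOn_const
  apply ContinuousOn.add
  · exact ((Real.continuous_exp.comp (continuous_const.mul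
      (continuous_id.sub continuous_const))).continuousOn).mul continuousOn_const
  · exact continuousOn_const.mul ((midInt_cont t₀ T (ν + D) δ I₀ hT x hx).mono hsub)

lemma fop_bound (t₀ ν D δ S₀ R₀ I₀ T η : ℝ) (hν : 0 ≤ ν) (hD : 0 ≤ D) (hδ : 0 ≤ δ)
    (hη : 0 ≤ η) (hT : 0 ≤ T) (x y : ℝ → ℝ)
    (hx : ContinuousOn x (Icc t₀ (t₀ + T))) (hy : ContinuousOn y (Icc t₀ (t₀ + T)))
    (hdiff : ∀ s ∈ Icc t₀ (t₀ + T), |x s - y s| ≤ η)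
    (t : ℝ) (ht : t ∈ Icc t₀ (t₀ + T)) :
    |Fop t₀ ν D δ S₀ R₀ I₀ x t - Fop t₀ ν D δ S₀ R₀ I₀ y t|
      ≤ (1 + δ * ν * T * T) * T * η := by
  have hT' : t₀ ≤ t₀ + T := by linarith
  have hc : 0 ≤ ν + D := by linarith
  rw [Fop_eq, Fop_eq]
  have heq : ∀ a b : ℝ, S₀ - a - (S₀ - b) = -(a - b) := by intro a b; ring
  rw [heq, abs_neg]
  rw [← intervalIntegral.integral_sub
    (fop_integrand_intble t₀ ν D δ R₀ I₀ T t hT' x hx ht)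
    (fop_integrand_intble t₀ ν D δ R₀ I₀ T t hT' y hy ht)]
  have hb : ∀ m ∈ Set.uIoc t₀ t,
      ‖(x m - δ * (Real.exp (-δ * (m - t₀)) * R₀ + ν * midInt t₀ (ν + D) δ I₀ x m))
        - (y m - δ * (Real.exp (-δ * (m - t₀)) * R₀ + ν * midInt t₀ (ν + D) δ I₀ y m))‖
        ≤ (1 + δ * ν * T * T) * η := by
    intro m hm
    rw [uIoc_of_le ht.1] at hm
    have hmJ : m ∈ Icc t₀ (t₀ + T) := ⟨hm.1.le, le_trans hm.2 ht.2⟩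
    have heq2 : (x m - δ * (Real.exp (-δ * (m - t₀)) * R₀ + ν * midInt t₀ (ν + D) δ I₀ x m))
        - (y m - δ * (Real.exp (-δ * (m - t₀)) * R₀ + ν * midInt t₀ (ν + D) δ I₀ y m))
        = (x m - y m) - δ * ν * (midInt t₀ (ν + D) δ I₀ x m - midInt t₀ (ν + D) δ I₀ y m) := by
      ring
    rw [heq2, Real.norm_eq_abs]
    have h1 := hdiff m hmJ
    have h2 := midInt_bound t₀ T (ν + D) δ I₀ η hc hδ hη hT x y hx hy hdiff m hmJ
    calc |(x m - y m) - δ * ν * (midInt t₀ (ν + D) δ I₀ x m - midInt t₀ (ν + D) δ I₀ y m)|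
        ≤ |x m - y m| + |δ * ν| * |midInt t₀ (ν + D) δ I₀ x m - midInt t₀ (ν + D) δ I₀ y m| := by
          rw [← abs_mul]
          exact abs_sub (x m - y m) _
      _ ≤ η + δ * ν * (η * T * T) := by
          have : |δ * ν| = δ * ν := abs_of_nonneg (by positivity)
          rw [this]
          exact add_le_add h1 (mul_le_mul_of_nonneg_left h2 (by positivity))
      _ = (1 + δ * ν * T * T) * η := by ring
  calc ‖∫ m in t₀..t,
        ((x m - δ * (Real.exp (-δ * (m - t₀)) * R₀ + ν * midInt t₀ (ν + D) δ I₀ x m))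
        - (y m - δ * (Real.exp (-δ * (m - t₀)) * R₀ + ν * midInt t₀ (ν + D) δ I₀ y m)))‖
        ≤ (1 + δ * ν * T * T) * η * |t - t₀| :=
          intervalIntegral.norm_integral_le_of_norm_le_const hb
    _ ≤ (1 + δ * ν * T * T) * T * η := by
        rw [abs_of_nonneg (by linarith [ht.1])]
        have h3 : t - t₀ ≤ T := by linarith [ht.2]
        nlinarith [mul_le_mul_of_nonneg_left h3 (mul_nonneg (by positivity : (0:ℝ) ≤ 1 + δ * ν * T * T) hη)]

lemma gam_intble (t₀ ν D T t : ℝ) (β x : ℝ → ℝ)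
    (hβ_cont : ContinuousOn β (Ici 0))
    (hx : ContinuousOn x (Icc t₀ (t₀ + T))) (ht : t ∈ Icc t₀ (t₀ + T)) :
    IntervalIntegrable (fun a => Gam ν D β a * x (t - a)) volume 0 (t - t₀) := by
  apply ContinuousOn.intervalIntegrable
  have h0 : (0:ℝ) ≤ t - t₀ := by linarith [ht.1]
  rw [uIcc_of_le h0]
  apply ContinuousOn.mul
  · have hG : ContinuousOn (Gam ν D β) (Ici 0) :=
      ((Real.continuous_exp.comp (continuous_const.mul continuous_id)).continuousOn).mul hβ_cont
    exact hG.mono (fun a ha => ha.1)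
  · apply hx.comp (continuous_const.sub continuous_id).continuousOn
    intro a ha
    simp only [id_eq, mem_Icc, Pi.sub_apply] at *
    exact ⟨by linarith [ha.2], by linarith [ha.1, ht.2]⟩

lemma gam_bound (t₀ ν D T η : ℝ) (hν : 0 ≤ ν) (hD : 0 ≤ D) (hη : 0 ≤ η)
    (β : ℝ → ℝ) (hβ_cont : ContinuousOn β (Ici 0))
    (hβ_mem : ∀ a, 0 ≤ a → β a ∈ Icc (0:ℝ) 1)
    (x y : ℝ → ℝ)
    (hx : ContinuousOn x (Icc t₀ (t₀ + T))) (hy : ContinuousOn y (Icc t₀ (t₀ + T)))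
    (hdiff : ∀ s ∈ Icc t₀ (t₀ + T), |x s - y s| ≤ η)
    (t : ℝ) (ht : t ∈ Icc t₀ (t₀ + T)) :
    |(∫ a in (0:ℝ)..(t - t₀), Gam ν D β a * x (t - a))
      - ∫ a in (0:ℝ)..(t - t₀), Gam ν D β a * y (t - a)| ≤ η * T := by
  have h0 : (0:ℝ) ≤ t - t₀ := by linarith [ht.1]
  rw [← intervalIntegral.integral_sub (gam_intble t₀ ν D T t β x hβ_cont hx ht)
    (gam_intble t₀ ν D T t β y hβ_cont hy ht)]
  have hb : ∀ a ∈ Set.uIoc (0:ℝ) (t - t₀),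
      ‖Gam ν D β a * x (t - a) - Gam ν D β a * y (t - a)‖ ≤ η := by
    intro a ha
    rw [uIoc_of_le h0] at ha
    rw [← mul_sub, Real.norm_eq_abs, abs_mul]
    have hG : |Gam ν D β a| ≤ 1 := by
      unfold Gam
      rw [abs_mul, Real.abs_exp]
      have he : Real.exp (-(ν + D) * a) ≤ 1 := by
        rw [Real.exp_le_one_iff]
        nlinarith [ha.1]
      have hβ := hβ_mem a ha.1.le
      have hβa : |β a| ≤ 1 := abs_le.mpr ⟨by linarith [hβ.1], hβ.2⟩
      calc Real.exp (-(ν + D) * a) * |β a| ≤ 1 * 1 :=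
            mul_le_mul he hβa (abs_nonneg _) zero_le_one
        _ = 1 := one_mul 1
    have hmem : t - a ∈ Icc t₀ (t₀ + T) := by
      simp only [mem_Icc] at *
      exact ⟨by linarith [ha.2], by linarith [ha.1, ht.2]⟩
    calc |Gam ν D β a| * |x (t - a) - y (t - a)| ≤ 1 * η :=
          mul_le_mul hG (hdiff _ hmem) (abs_nonneg _) zero_le_one
      _ = η := one_mul η
  calc ‖∫ a in (0:ℝ)..(t - t₀), (Gam ν D β a * x (t - a) - Gam ν D β a * y (t - a))‖
        ≤ η * |t - t₀ - 0| := intervalIntegral.norm_integral_le_of_norm_le_const hb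
    _ ≤ η * T := by
        rw [sub_zero, abs_of_nonneg h0]
        exact mul_le_mul_of_nonneg_left (by linarith [ht.2]) hη

lemma lam_tendsto (t₀ ν D I₀ t : ℝ) (hc : 0 ≤ ν + D) (ht : t₀ ≤ t)
    (β p : ℝ → ℝ) (hβ_cont : ContinuousOn β (Ici 0))
    (hβ_mem : ∀ a, 0 ≤ a → β a ∈ Icc (0:ℝ) 1)
    (hp_nonneg : ∀ a, 0 ≤ a → 0 ≤ p a)
    (hp_int : IntegrableOn p (Ioi 0))
    (hp_one : ∫ a in Ioi (0:ℝ), p a = 1) :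
    Tendsto (fun κ => Lam t₀ ν D I₀ β p κ t) atTop (𝓝 (I₀ * Gam ν D β (t - t₀))) := by
  set s := t - t₀ with hs_def
  have hs : 0 ≤ s := by simp [hs_def]; linarith
  -- Step A : rewrite via change of variables for κ > 0
  have stepA : ∀ κ : ℝ, 0 < κ →
      (∫ a in Ioi (0:ℝ), β (a + s) * (κ * p (κ * a)))
        = ∫ y in Ioi (0:ℝ), β (y / κ + s) * p y := by
    intro κ hκ
    have e1 : (fun a : ℝ => β (a + s) * (κ * p (κ * a)))
        = fun a : ℝ => κ * ((fun y => β (y / κ + s) * p y) (κ * a)) := by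
      funext a
      simp only [mul_div_cancel_left₀ _ (ne_of_gt hκ)]
      ring
    have h2 := integral_comp_mul_left_Ioi (fun y => β (y / κ + s) * p y) 0 hκ
    rw [mul_zero] at h2
    rw [e1, integral_const_mul, h2, smul_eq_mul,
      ← mul_assoc, mul_inv_cancel₀ (ne_of_gt hκ), one_mul]
  -- Step B : dominated convergence
  have stepB : Tendsto (fun κ : ℝ => ∫ y in Ioi (0:ℝ), β (y / κ + s) * p y) atTop
      (𝓝 (β s)) := by
    have hlim : (∫ y in Ioi (0:ℝ), β s * p y) = β s := by
      rw [integral_const_mul, hp_one, mul_one]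
    rw [← hlim]
    apply tendsto_integral_filter_of_dominated_convergence (bound := p)
    · filter_upwards [eventually_gt_atTop (0:ℝ)] with κ hκ
      apply AEStronglyMeasurable.mul _ hp_int.1
      apply ContinuousOn.aestronglyMeasurable _ measurableSet_Ioi
      apply hβ_cont.comp ((continuous_id.div_const κ).add continuous_const).continuousOn
      intro y hy
      simp only [id_eq, mem_Ioi, mem_Ici] at *
      have := div_pos hy hκ
      show 0 ≤ y / κ + s
      linarith
    · filter_upwards [eventually_gt_atTop (0:ℝ)] with κ hκ
      filter_upwards [ae_restrict_mem measurableSet_Ioi] with y hy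
      have harg : 0 ≤ y / κ + s := by
        have : 0 < y / κ := div_pos hy hκ
        linarith
      have hβb := hβ_mem _ harg
      rw [Real.norm_eq_abs, abs_mul]
      have h1 : |β (y / κ + s)| ≤ 1 := abs_le.mpr ⟨by linarith [hβb.1], hβb.2⟩
      have h2 : |p y| = p y := abs_of_nonneg (hp_nonneg y (le_of_lt hy))
      calc |β (y / κ + s)| * |p y| ≤ 1 * p y := by
            rw [h2]
            exact mul_le_mul_of_nonneg_right h1 (hp_nonneg y (le_of_lt hy))
        _ = p y := one_mul _
    · exact hp_int
    · filter_upwards [ae_restrict_mem measurableSet_Ioi] with y hy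
      apply Tendsto.mul _ tendsto_const_nhds
      have harg : Tendsto (fun κ : ℝ => y / κ + s) atTop (𝓝[Ici 0] s) := by
        rw [tendsto_nhdsWithin_iff]
        constructor
        · have h0 : Tendsto (fun κ : ℝ => y / κ) atTop (𝓝 0) :=
            Tendsto.div_atTop tendsto_const_nhds tendsto_id
          have := h0.add (tendsto_const_nhds (x := s))
          rwa [zero_add] at this
        · filter_upwards [eventually_gt_atTop (0:ℝ)] with κ hκ
          have : 0 < y / κ := div_pos hy hκ
          simp only [mem_Ici]
          linarith
      exact (hβ_cont s hs).tendsto.comp harg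
  -- combine
  have : Tendsto (fun κ : ℝ => I₀ * Real.exp (-(ν + D) * s) *
      ∫ y in Ioi (0:ℝ), β (y / κ + s) * p y) atTop
      (𝓝 (I₀ * Real.exp (-(ν + D) * s) * β s)) :=
    tendsto_const_nhds.mul stepB
  have hGam : I₀ * Real.exp (-(ν + D) * s) * β s = I₀ * Gam ν D β s := by
    unfold Gam; ring
  rw [hGam] at this
  apply this.congr'
  filter_upwards [eventually_gt_atTop (0:ℝ)] with κ hκ
  unfold Lam
  rw [stepA κ hκ]

/-- if `N_κ` are continuous, uniformly bounded solutions of the mollified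
Volterra equations on `[t₀, t₀+T]` and `N_κ → A` uniformly as `κ → ∞`, then `A` is
continuous and satisfies the limiting (single-cohort) Volterra equation. -/
theorem uniform_limit_satisfies_limit_equation
    (t₀ ν D δ S₀ R₀ I₀ T C τmax : ℝ)
    (hν : 0 < ν) (hD : 0 ≤ D) (hδ : 0 ≤ δ)
    (hS₀ : 0 ≤ S₀) (hR₀ : 0 ≤ R₀) (hI₀ : 0 < I₀) (hT : 0 < T)
    (τ : ℝ → ℝ) (hτ_cont : ContinuousOn τ (Icc t₀ (t₀ + T)))
    (hτ_nonneg : ∀ t ∈ Icc t₀ (t₀ + T), 0 ≤ τ t)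
    (hτ_bdd : ∀ t ∈ Icc t₀ (t₀ + T), τ t ≤ τmax)
    (β : ℝ → ℝ) (hβ_cont : ContinuousOn β (Ici 0))
    (hβ_mem : ∀ a, 0 ≤ a → β a ∈ Icc (0 : ℝ) 1)
    (p : ℝ → ℝ) (hp_nonneg : ∀ a, 0 ≤ a → 0 ≤ p a)
    (hp_int : IntegrableOn p (Ioi 0))
    (hp_one : ∫ a in Ioi (0 : ℝ), p a = 1)
    (N : ℝ → ℝ → ℝ) (A : ℝ → ℝ)
    (hN_cont : ∀ κ : ℝ, 0 < κ → ContinuousOn (N κ) (Icc t₀ (t₀ + T)))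
    (hN_bdd : ∀ κ : ℝ, 0 < κ → ∀ t ∈ Icc t₀ (t₀ + T), |N κ t| ≤ C)
    (hN_eq : ∀ κ : ℝ, 0 < κ → ∀ t ∈ Icc t₀ (t₀ + T),
      N κ t = τ t * Fop t₀ ν D δ S₀ R₀ I₀ (N κ) t *
        (Lam t₀ ν D I₀ β p κ t +
          ∫ a in (0 : ℝ)..(t - t₀), Gam ν D β a * N κ (t - a)))
    (hconv : TendstoUniformlyOn (fun κ : ℝ => N κ) A atTop (Icc t₀ (t₀ + T))) :
    ContinuousOn A (Icc t₀ (t₀ + T)) ∧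
      ∀ t ∈ Icc t₀ (t₀ + T),
        A t = τ t * Fop t₀ ν D δ S₀ R₀ I₀ A t *
          (I₀ * Gam ν D β (t - t₀) +
            ∫ a in (0 : ℝ)..(t - t₀), Gam ν D β a * A (t - a)) := by
  have hT' : t₀ ≤ t₀ + T := by linarith
  have hc : 0 ≤ ν + D := by linarith
  have hev_cont : ∀ᶠ κ : ℝ in atTop, ContinuousOn (N κ) (Icc t₀ (t₀ + T)) := by
    filter_upwards [eventually_gt_atTop (0:ℝ)] with κ hκ
    exact hN_cont κ hκ
  have hA_cont : ContinuousOn A (Icc t₀ (t₀ + T)) := hconv.continuousOn hev_cont.frequently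
  refine ⟨hA_cont, fun t ht => ?_⟩
  have h1 : Tendsto (fun κ => N κ t) atTop (𝓝 (A t)) := hconv.tendsto_at ht
  -- Fop convergence
  have hFop : Tendsto (fun κ => Fop t₀ ν D δ S₀ R₀ I₀ (N κ) t) atTop
      (𝓝 (Fop t₀ ν D δ S₀ R₀ I₀ A t)) := by
    rw [Metric.tendsto_nhds]
    intro ε hε
    set K := (1 + δ * ν * T * T) * T with hK
    have hK0 : 0 ≤ K := by positivity
    have hηpos : 0 < ε / (K + 1) := by positivity
    filter_upwards [Metric.tendstoUniformlyOn_iff.mp hconv _ hηpos,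
      eventually_gt_atTop (0:ℝ)] with κ hκ1 hκ2
    have hdiff : ∀ s ∈ Icc t₀ (t₀ + T), |N κ s - A s| ≤ ε / (K + 1) := by
      intro s hs
      have h := hκ1 s hs
      rw [Real.dist_eq] at h
      rw [abs_sub_comm]
      exact h.le
    have hb := fop_bound t₀ ν D δ S₀ R₀ I₀ T (ε / (K + 1)) hν.le hD hδ hηpos.le hT.le
      (N κ) A (hN_cont κ hκ2) hA_cont hdiff t ht
    rw [Real.dist_eq]
    calc |Fop t₀ ν D δ S₀ R₀ I₀ (N κ) t - Fop t₀ ν D δ S₀ R₀ I₀ A t|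
        ≤ K * (ε / (K + 1)) := hb
      _ < ε := by
          rw [mul_div_assoc', div_lt_iff₀ (by linarith)]
          nlinarith
  -- convolution term convergence
  have hGamT : Tendsto (fun κ => ∫ a in (0:ℝ)..(t - t₀), Gam ν D β a * N κ (t - a)) atTop
      (𝓝 (∫ a in (0:ℝ)..(t - t₀), Gam ν D β a * A (t - a))) := by
    rw [Metric.tendsto_nhds]
    intro ε hε
    have hηpos : 0 < ε / (T + 1) := by positivity
    filter_upwards [Metric.tendstoUniformlyOn_iff.mp hconv _ hηpos,
      eventually_gt_atTop (0:ℝ)] with κ hκ1 hκ2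
    have hdiff : ∀ s ∈ Icc t₀ (t₀ + T), |N κ s - A s| ≤ ε / (T + 1) := by
      intro s hs
      have h := hκ1 s hs
      rw [Real.dist_eq] at h
      rw [abs_sub_comm]
      exact h.le
    have hb := gam_bound t₀ ν D T (ε / (T + 1)) hν.le hD hηpos.le β hβ_cont hβ_mem
      (N κ) A (hN_cont κ hκ2) hA_cont hdiff t ht
    rw [Real.dist_eq]
    calc |(∫ a in (0:ℝ)..(t - t₀), Gam ν D β a * N κ (t - a))
          - ∫ a in (0:ℝ)..(t - t₀), Gam ν D β a * A (t - a)|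
        ≤ ε / (T + 1) * T := hb
      _ < ε := by
          rw [div_mul_eq_mul_div, div_lt_iff₀ (by linarith)]
          nlinarith
  have hLam := lam_tendsto t₀ ν D I₀ t hc ht.1 β p hβ_cont hβ_mem hp_nonneg hp_int hp_one
  have hRHS : Tendsto (fun κ => τ t * Fop t₀ ν D δ S₀ R₀ I₀ (N κ) t *
      (Lam t₀ ν D I₀ β p κ t + ∫ a in (0:ℝ)..(t - t₀), Gam ν D β a * N κ (t - a))) atTop
      (𝓝 (τ t * Fop t₀ ν D δ S₀ R₀ I₀ A t *
        (I₀ * Gam ν D β (t - t₀) + ∫ a in (0:ℝ)..(t - t₀), Gam ν D β a * A (t - a)))) :=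
    (tendsto_const_nhds.mul hFop).mul (hLam.add hGamT)
  have h2 : Tendsto (fun κ => N κ t) atTop
      (𝓝 (τ t * Fop t₀ ν D δ S₀ R₀ I₀ A t *
        (I₀ * Gam ν D β (t - t₀) + ∫ a in (0:ℝ)..(t - t₀), Gam ν D β a * A (t - a)))) := by
    apply hRHS.congr'
    filter_upwards [eventually_gt_atTop (0:ℝ)] with κ hκ
    exact (hN_eq κ hκ t ht).symm
  exact tendsto_nhds_unique h1 h2
end

section
/- Let t₀ ∈ ℝ, ν > 0, D > 0, I₀ ∈ ℝ, let N : [t₀,∞) → ℝ be continuous, and suppose CD : [t₀,∞) → ℝ is differentiable with CD′(t) = D [ e^{−(ν+D)(t−t₀)} I₀ + ∫_{t₀}^{t} e^{−(ν+D)(t−σ)} N(σ) dσ ] for all t ≥ t₀. Then CD′ is differentiable on [t₀,∞) and for every t ≥ t₀, N(t) = ( (ν+D) CD′(t) + CD″(t) ) / D. In particular I₀ = CD′(t₀)/D. -/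
open MeasureTheory Set Filter Real

/-- if `CD′(t) = D[ e^{−(ν+D)(t−t₀)} I₀ + ∫_{t₀}^{t} e^{−(ν+D)(t−σ)} N(σ) dσ ]`
with `N` continuous, then `CD′` is differentiable on `[t₀,∞)` with derivative `CD″` and
`N(t) = ((ν+D) CD′(t) + CD″(t)) / D` for all `t ≥ t₀`; in particular `I₀ = CD′(t₀)/D`. -/
theorem newly_infected_from_cumulative_deaths
    (t₀ ν D I₀ : ℝ) (hν : 0 < ν) (hD : 0 < D)
    (N : ℝ → ℝ) (hN_cont : ContinuousOn N (Ici t₀))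
    (CD CD' : ℝ → ℝ)
    (hCD' : ∀ t ∈ Ici t₀, HasDerivWithinAt CD (CD' t) (Ici t₀) t)
    (hCD'_eq : ∀ t ∈ Ici t₀,
      CD' t = D * (Real.exp (-(ν + D) * (t - t₀)) * I₀ +
        ∫ σ in t₀..t, Real.exp (-(ν + D) * (t - σ)) * N σ)) :
    (∃ CD'' : ℝ → ℝ,
      (∀ t ∈ Ici t₀, HasDerivWithinAt CD' (CD'' t) (Ici t₀) t) ∧
      (∀ t ∈ Ici t₀, N t = ((ν + D) * CD' t + CD'' t) / D)) ∧
    I₀ = CD' t₀ / D := by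
  set k : ℝ := ν + D with hk
  -- extend N continuously to all of ℝ
  set Nt : ℝ → ℝ := fun σ => N (max σ t₀) with hNt
  have hNt_cont : Continuous Nt :=
    hN_cont.comp_continuous (continuous_id.max continuous_const)
      (fun x => mem_Ici.mpr (le_max_right _ _))
  have hNt_eq : ∀ σ ∈ Ici t₀, Nt σ = N σ := fun σ hσ => by
    simp [hNt, max_eq_left (mem_Ici.mp hσ)]
  -- the integrand in exponential form
  set g : ℝ → ℝ := fun σ => Real.exp (k * (σ - t₀)) * Nt σ with hg
  have hg_cont : Continuous g := by continuity
  set f : ℝ → ℝ := fun t => ∫ σ in t₀..t, g σ with hf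
  have hf_deriv : ∀ t : ℝ, HasDerivAt f (g t) t := fun t =>
    intervalIntegral.integral_hasDerivAt_right
      (hg_cont.intervalIntegrable _ _)
      (hg_cont.stronglyMeasurableAtFilter _ _)
      hg_cont.continuousAt
  -- CD' agrees with G on Ici t₀
  set G : ℝ → ℝ := fun t => D * (Real.exp (-k * (t - t₀)) * (I₀ + f t)) with hG
  have hCD'_G : ∀ t ∈ Ici t₀, CD' t = G t := by
    intro t ht
    have hint : (∫ σ in t₀..t, Real.exp (-k * (t - σ)) * N σ)
        = Real.exp (-k * (t - t₀)) * f t := by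
      rw [hf, ← intervalIntegral.integral_const_mul]
      apply intervalIntegral.integral_congr
      intro σ hσ
      have hσ' : t₀ ≤ σ := by
        rcases hσ with ⟨h1, _⟩
        exact (le_min le_rfl (mem_Ici.mp ht)).trans h1
      simp only [hg]
      rw [hNt_eq σ hσ', ← mul_assoc, ← Real.exp_add]
      ring_nf
    rw [hCD'_eq t ht, hint, hG]
    ring
  have hG_deriv : ∀ t : ℝ, HasDerivAt G (-k * G t + D * Nt t) t := by
    intro t
    have h1 : HasDerivAt (fun t => Real.exp (-k * (t - t₀)))
        (Real.exp (-k * (t - t₀)) * (-k)) t := by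
      have : HasDerivAt (fun t : ℝ => -k * (t - t₀)) (-k) t := by
        simpa using ((hasDerivAt_id t).sub_const t₀).const_mul (-k)
      simpa using this.exp
    have h2 : HasDerivAt (fun t => I₀ + f t) (g t) t := by
      simpa using (hf_deriv t).const_add I₀
    have := (h1.mul h2).const_mul D
    refine this.congr_deriv ?_
    have hexp : Real.exp (-k * (t - t₀)) * g t = Nt t := by
      rw [hg, ← mul_assoc, ← Real.exp_add]
      ring_nf
      simp
    rw [← hexp]
    simp only [hG]
    ring
  refine ⟨⟨fun t => -k * CD' t + D * N t, ?_, ?_⟩, ?_⟩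
  · intro t ht
    have : HasDerivWithinAt G (-k * G t + D * Nt t) (Ici t₀) t :=
      (hG_deriv t).hasDerivWithinAt
    have h := this.congr (fun s hs => (hCD'_G s hs)) (hCD'_G t ht)
    rwa [← hCD'_G t ht, hNt_eq t ht] at h
  · intro t ht
    field_simp
    ring
  · have h0 : CD' t₀ = D * I₀ := by
      have := hCD'_eq t₀ (self_mem_Ici)
      simpa using this
    rw [h0]
    field_simp
end

section
/- Let m ≥ 1 be an integer, I₀ ∈ ℝ, and N : {0,1,…,m} → ℝ with N(j) ≥ 0 for all j and I₀ ≥ 0. Define the (m+1)×(m+1) real matrix M, with rows and columns indexed by k, a ∈ {0,…,m}, by: M(k,0) = N(m) if k = m and M(k,0) = 0 if k < m; for 1 ≤ a ≤ m, M(k,a) = N(m−a), except that M(0,m) = I₀ + N(0) and, for 1 ≤ k ≤ m−1, M(k, m−k) = 2 N(k). Then |det M| = ( m·I₀ + N(0) ) · ∏_{j=1}^{m} N(j). -/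
open Finset

lemma key' {ι : Type*} [Fintype ι] [DecidableEq ι] [Nonempty ι] (d c : ι → ℝ) :
    (Matrix.of fun i j => Matrix.diagonal d i j + c j).det
      = ∏ i, d i + ∑ k, c k * ∏ j ∈ Finset.univ.erase k, d j := by
  classical
  set a : ι → (ι → ℝ) := fun i => Matrix.diagonal d i with ha
  set b : ι → (ι → ℝ) := fun _ => c with hb
  have hM : (Matrix.of fun i j => Matrix.diagonal d i j + c j) = Matrix.of (a + b) := by
    ext i j; rfl
  rw [hM]
  rw [show (Matrix.det (Matrix.of (a + b)) : ℝ)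
      = Matrix.detRowAlternating.toMultilinearMap (a + b) from rfl]
  rw [MultilinearMap.map_add_univ]
  have hback : ∀ s : Finset ι, (Matrix.detRowAlternating.toMultilinearMap (s.piecewise a b) : ℝ)
      = Matrix.det (Matrix.of (s.piecewise a b)) := fun _ => rfl
  simp only [hback]
  have huniv : Matrix.det (Matrix.of (Finset.univ.piecewise a b)) = ∏ i, d i := by
    have h1 : Matrix.of (Finset.univ.piecewise a b) = Matrix.diagonal d := by
      rw [Finset.piecewise_univ]; rfl
    rw [h1, Matrix.det_diagonal]
  have herase : ∀ k : ι, Matrix.det (Matrix.of ((univ.erase k).piecewise a b))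
      = c k * ∏ j ∈ Finset.univ.erase k, d j := by
    intro k
    have hupd : Matrix.of ((univ.erase k).piecewise a b)
        = (Matrix.diagonal d).updateRow k c := by
      ext i j
      by_cases hik : i = k
      · subst hik; simp [Finset.piecewise, hb]
      · simp [Finset.piecewise, hik, Matrix.updateRow_ne hik, ha]
    rw [hupd]
    have hc : c = ∑ j, Pi.single j (c j) := (Finset.univ_sum_single c).symm
    rw [hc]
    have hsplit : ((Matrix.diagonal d).updateRow k (∑ j, Pi.single j (c j))).det
        = ∑ j, ((Matrix.diagonal d).updateRow k (Pi.single j (c j))).det :=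
      Matrix.detRowAlternating.toMultilinearMap.map_update_sum univ k
        (fun j => Pi.single j (c j)) (Matrix.diagonal d)
    rw [hsplit]
    rw [Finset.sum_eq_single k]
    · rw [Matrix.diagonal_updateRow_single, Matrix.det_diagonal,
        Finset.prod_update_of_mem (Finset.mem_univ k), ← hc, Finset.sdiff_singleton_eq_erase]
    · intro j _ hjk
      apply Matrix.det_eq_zero_of_column_eq_zero k
      intro i
      by_cases hik : i = k
      · subst hik
        rw [Matrix.updateRow_self]
        exact Pi.single_eq_of_ne (Ne.symm hjk) _
      · rw [Matrix.updateRow_ne hik]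
        exact Matrix.diagonal_apply_ne d hik
    · intro h; exact absurd (Finset.mem_univ k) h
  have hzero : ∀ s : Finset ι, s ≠ univ → (∀ k, s ≠ univ.erase k) →
      Matrix.det (Matrix.of (s.piecewise a b)) = 0 := by
    intro s hsu hse
    obtain ⟨i, hi⟩ : ∃ i, i ∉ s := by
      by_contra h; push_neg at h
      exact hsu (Finset.eq_univ_iff_forall.mpr h)
    have hss : s ⊆ univ.erase i := fun x hx =>
      Finset.mem_erase.mpr ⟨fun hxi => hi (hxi ▸ hx), Finset.mem_univ x⟩
    obtain ⟨j, hj, hjs⟩ : ∃ j ∈ univ.erase i, j ∉ s :=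
      Finset.exists_of_ssubset ⟨hss, fun h => hse i (Finset.Subset.antisymm hss h)⟩
    have hij : i ≠ j := fun h => (Finset.mem_erase.mp hj).1 h.symm
    apply Matrix.det_zero_of_row_eq hij
    show Finset.piecewise s a b i = Finset.piecewise s a b j
    rw [Finset.piecewise_eq_of_notMem _ _ _ hi, Finset.piecewise_eq_of_notMem _ _ _ hjs]
  -- now assemble the sum
  set T : Finset (Finset ι) := insert univ (univ.image fun k => univ.erase k) with hT
  have hmemT : ∀ s : Finset ι, s ∈ T ↔ s = univ ∨ ∃ k, s = univ.erase k := by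
    intro s
    simp [hT, eq_comm]
  have hsum : ∑ s : Finset ι, Matrix.det (Matrix.of (s.piecewise a b))
      = ∑ s ∈ T, Matrix.det (Matrix.of (s.piecewise a b)) := by
    refine (Finset.sum_subset (Finset.subset_univ T) ?_).symm
    intro s _ hs
    rw [hmemT] at hs; push_neg at hs
    exact hzero s hs.1 hs.2
  rw [hsum, hT]
  have hnotmem : (univ : Finset ι) ∉ univ.image fun k => (univ : Finset ι).erase k := by
    rw [Finset.mem_image]
    rintro ⟨k, -, hk⟩
    have := Finset.mem_univ k
    rw [← hk] at this
    exact (Finset.mem_erase.mp this).1 rfl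
  rw [Finset.sum_insert hnotmem, huniv]
  congr 1
  rw [Finset.sum_image]
  · exact Finset.sum_congr rfl fun k _ => herase k
  · intro x _ y _ hxy
    by_contra hne
    have hy : y ∈ (univ : Finset ι).erase x :=
      Finset.mem_erase.mpr ⟨fun h => hne h.symm, Finset.mem_univ y⟩
    rw [show univ.erase x = univ.erase y from hxy] at hy
    exact (Finset.mem_erase.mp hy).1 rfl

/-- determinant of the coefficient matrix `CoR_m` of the linear system for
the reproductive powers `R(t₀+m, a)`, `a = 0,…,m`: with rows/columns indexed by
`k, a ∈ {0,…,m}`,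
`M(k,0) = N(m)` if `k = m` and `0` otherwise; for `1 ≤ a ≤ m`, `M(k,a) = N(m−a)` except
`M(0,m) = I₀ + N(0)` and `M(k, m−k) = 2 N(k)` for `1 ≤ k ≤ m−1`.
Then `|det M| = ( m I₀ + N(0) ) ∏_{j=1}^{m} N(j)`. -/
theorem coefficient_matrix_det
    (m : ℕ) (hm : 1 ≤ m) (I₀ : ℝ) (hI₀ : 0 ≤ I₀)
    (N : ℕ → ℝ) (hN : ∀ j ≤ m, 0 ≤ N j)
    (M : Matrix (Fin (m + 1)) (Fin (m + 1)) ℝ)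
    (hM : ∀ k a : Fin (m + 1), M k a =
      if (a : ℕ) = 0 then (if (k : ℕ) = m then N m else 0)
      else if (k : ℕ) = 0 ∧ (a : ℕ) = m then I₀ + N 0
      else if 1 ≤ (k : ℕ) ∧ (k : ℕ) ≤ m - 1 ∧ (a : ℕ) = m - (k : ℕ) then 2 * N (k : ℕ)
      else N (m - (a : ℕ))) :
    |M.det| = ((m : ℝ) * I₀ + N 0) * ∏ j ∈ Finset.Icc 1 m, N j := by
  classical
  set P : ℝ := ∏ j ∈ Finset.Icc 1 m, N j with hP
  set d : Fin (m + 1) → ℝ := fun k => if (k : ℕ) = m then I₀ else N (m - (k : ℕ)) with hd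
  set c : Fin (m + 1) → ℝ := fun a => if (a : ℕ) = 0 then 0 else N (m - (a : ℕ)) with hc
  -- the permuted matrix
  have hM2 : M.submatrix Fin.revPerm id = Matrix.of fun i j => Matrix.diagonal d i j + c j := by
    ext k a
    have hk : (k : ℕ) ≤ m := Nat.lt_succ_iff.mp k.isLt
    have ha : (a : ℕ) ≤ m := Nat.lt_succ_iff.mp a.isLt
    have hrev : ((Fin.revPerm k : Fin (m + 1)) : ℕ) = m - (k : ℕ) := by
      show ((Fin.rev k : Fin (m+1)) : ℕ) = m - (k : ℕ)
      rw [Fin.val_rev]; omega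
    rw [Matrix.submatrix_apply, hM, hrev, id_eq, Matrix.of_apply, Matrix.diagonal_apply, hd, hc]
    have hfe : (k = a) ↔ ((k : ℕ) = (a : ℕ)) := Fin.ext_iff
    simp only [hfe]
    split_ifs
    all_goals try ring1
    all_goals try omega
    any_goals (first
      | (rw [add_zero]; congr 1; omega)
      | (congr 2 <;> omega)
      | (rw [← ‹(k : Fin (m+1)).val = (a : Fin (m+1)).val›]; ring1))
  -- products
  have hcastprod : ∏ i : Fin m, d i.castSucc = P := by
    have h1 : ∀ i : Fin m, d i.castSucc = N (m - (i : ℕ)) := by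
      intro i
      rw [hd]
      simp only [Fin.coe_castSucc]
      rw [if_neg (Nat.ne_of_lt i.isLt)]
    calc ∏ i : Fin m, d i.castSucc = ∏ i : Fin m, N (m - (i : ℕ)) :=
          Finset.prod_congr rfl fun i _ => h1 i
      _ = ∏ i ∈ Finset.range m, N (m - i) := Fin.prod_univ_eq_prod_range (fun i => N (m - i)) m
      _ = ∏ i ∈ Finset.range m, N (m - 1 - i + 1) := by
          refine Finset.prod_congr rfl fun i hi => ?_
          have := Finset.mem_range.mp hi
          congr 1; omega
      _ = ∏ i ∈ Finset.range m, N (i + 1) := Finset.prod_range_reflect (fun j => N (j + 1)) m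
      _ = ∏ i ∈ Finset.range (m + 1 - 1), N (1 + i) := by
          refine Finset.prod_congr (by norm_num) fun i _ => by rw [Nat.add_comm]
      _ = ∏ j ∈ Finset.Ico 1 (m + 1), N j := (Finset.prod_Ico_eq_prod_range _ 1 (m+1)).symm
      _ = P := by rw [hP, Finset.Ico_add_one_right_eq_Icc]
  have hPd : ∏ k : Fin (m + 1), d k = I₀ * P := by
    rw [Fin.prod_univ_castSucc, hcastprod]
    have : d (Fin.last m) = I₀ := by rw [hd]; simp
    rw [this, mul_comm]
  have heraselast : ∏ j ∈ Finset.univ.erase (Fin.last m), d j = P := by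
    have himg : Finset.univ.erase (Fin.last m) = Finset.univ.image Fin.castSucc := by
      ext j
      constructor
      · intro hj
        obtain ⟨i, hi⟩ := Fin.exists_castSucc_eq.mpr (Finset.mem_erase.mp hj).1
        exact Finset.mem_image.mpr ⟨i, Finset.mem_univ i, hi⟩
      · intro hj
        obtain ⟨i, -, rfl⟩ := Finset.mem_image.mp hj
        exact Finset.mem_erase.mpr ⟨(Fin.castSucc_lt_last i).ne, Finset.mem_univ _⟩
    rw [himg, Finset.prod_image (fun x _ y _ h => Fin.castSucc_injective m h), hcastprod]
  
  have hc0 : c (0 : Fin (m + 1)) = 0 := by simp [hc]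
  have hlast_ne : (Fin.last m) ≠ (0 : Fin (m + 1)) := by
    intro h
    have := congrArg Fin.val h
    simp only [Fin.val_last, Fin.val_zero] at this
    omega
  have hclast : c (Fin.last m) = N 0 := by
    rw [hc]; simp only [Fin.val_last]
    rw [if_neg (by omega), Nat.sub_self]
  have hlmem : Fin.last m ∈ (Finset.univ : Finset (Fin (m + 1))).erase 0 :=
    Finset.mem_erase.mpr ⟨hlast_ne, Finset.mem_univ _⟩
  have hS : ∑ k : Fin (m + 1), c k * ∏ j ∈ Finset.univ.erase k, d j
      = N 0 * P + ((m - 1 : ℕ) : ℝ) * (I₀ * P) := by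
    rw [← Finset.add_sum_erase _ _ (Finset.mem_univ (0 : Fin (m + 1)))]
    rw [hc0, zero_mul, zero_add]
    rw [← Finset.add_sum_erase _ _ hlmem]
    rw [hclast, heraselast]
    congr 1
    have hconst : ∀ x ∈ ((Finset.univ : Finset (Fin (m + 1))).erase 0).erase (Fin.last m),
        c x * ∏ j ∈ Finset.univ.erase x, d j = I₀ * P := by
      intro x hx
      have hx1 := Finset.mem_erase.mp hx
      have hx2 := Finset.mem_erase.mp hx1.2
      have hx0 : (x : ℕ) ≠ 0 := fun h => hx2.1 (Fin.ext_iff.mpr (by simpa using h))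
      have hxm : (x : ℕ) ≠ m := fun h => hx1.1 (Fin.ext_iff.mpr (by simp [Fin.val_last, h]))
      have hcx : c x = d x := by rw [hc, hd]; simp only; rw [if_neg hx0, if_neg hxm]
      rw [hcx, Finset.mul_prod_erase Finset.univ d (Finset.mem_univ x), hPd]
    rw [Finset.sum_congr rfl hconst, Finset.sum_const]
    have hcard : (((Finset.univ : Finset (Fin (m + 1))).erase 0).erase (Fin.last m)).card
        = m - 1 := by
      rw [Finset.card_erase_of_mem hlmem, Finset.card_erase_of_mem (Finset.mem_univ _),
        Finset.card_univ, Fintype.card_fin]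
      omega
    rw [hcard, nsmul_eq_mul]
  have hdet2 : (M.submatrix Fin.revPerm id).det
      = I₀ * P + (N 0 * P + ((m - 1 : ℕ) : ℝ) * (I₀ * P)) := by
    rw [hM2, key', hPd, hS]
  have habs : |(M.submatrix Fin.revPerm id).det| = |M.det| := by
    rw [Matrix.det_permute, abs_mul]
    rcases Int.units_eq_one_or (Equiv.Perm.sign (Fin.revPerm : Equiv.Perm (Fin (m + 1))))
      with h | h <;> rw [h] <;> norm_num
  have hfinal : I₀ * P + (N 0 * P + ((m - 1 : ℕ) : ℝ) * (I₀ * P)) = ((m : ℝ) * I₀ + N 0) * P := by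
    rw [Nat.cast_sub hm]; push_cast; ring
  have hPnn : 0 ≤ P := Finset.prod_nonneg fun j hj => hN j (Finset.mem_Icc.mp hj).2
  have hN0 : 0 ≤ N 0 := hN 0 (Nat.zero_le m)
  rw [← habs, hdet2, hfinal, abs_of_nonneg]
  exact mul_nonneg (add_nonneg (mul_nonneg (Nat.cast_nonneg m) hI₀) hN0) hPnn
end

section
/- Let m ≥ 1 be an integer, I₀ > 0, and N : {0,1,…,m} → ℝ with N(0) ≥ 0 and N(j) ≠ 0 for all j ∈ {1,…,m}. Define the (m+1)×(m+1) real matrix M, with rows and columns indexed by k, a ∈ {0,…,m}, by: M(k,0) = N(m) if k = m and M(k,0) = 0 if k < m; for 1 ≤ a ≤ m, M(k,a) = N(m−a), except that M(0,m) = I₀ + N(0) and, for 1 ≤ k ≤ m−1, M(k, m−k) = 2 N(k). Then M is invertible; consequently, for every vector b ∈ ℝ^{m+1} the linear system M x = b has a unique solution x ∈ ℝ^{m+1}. -/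
open Finset

/-- Auxiliary lemma: a matrix of the form `anti-diagonal + rank-one` with nonzero
anti-diagonal entries and the right scalar is invertible (via an explicit inverse). -/
lemma helper_pos (x s wr : ℝ) (hx : x ≠ 0) (hs : s ≠ 0) :
    x * (1 * (1/x) - wr/(s*x*x)) + wr * (1/x) - (s-1) * (wr/(s*x)) = 1 := by
  have e1 : x * (1/x) = 1 := by field_simp
  have e2 : x * (wr/(s*x*x)) = wr/(s*x) := by field_simp
  have e3 : wr * (1/x) = s * (wr/(s*x)) := by field_simp
  rw [one_mul, mul_sub, e1, e2, e3]
  ring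

lemma helper_neg (x y s wr : ℝ) (hx : x ≠ 0) (hy : y ≠ 0) (hs : s ≠ 0) :
    x * (0 * (1/y) - wr/(s*x*y)) + wr * (1/y) - (s-1) * (wr/(s*y)) = 0 := by
  have e2 : x * (wr/(s*x*y)) = wr/(s*y) := by field_simp
  have e3 : wr * (1/y) = s * (wr/(s*y)) := by field_simp
  rw [zero_mul, zero_sub, mul_neg, e2, e3]
  ring

lemma helper_step (ci ck cj wr wj s d1 d2 : ℝ) :
    (ci * d1 + wj) * (d2 * (1/ck) - wr/(s*cj*ck)) =
      d1 * (ci * (d2 * (1/ck) - wr/(s*cj*ck))) + d2 * (wj * (1/ck))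
        - (wj/cj) * (wr/(s*ck)) := by
  have e : (wj/cj) * (wr/(s*ck)) = wj * (wr/(s*cj*ck)) := by
    rw [div_mul_div_comm, ← mul_div_assoc]
    congr 1
    ring
  rw [e]
  ring

lemma aux_antidiag_rank_one_isUnit {n : ℕ} (c w : Fin (n+1) → ℝ)
    (hc : ∀ k, c k ≠ 0) (s : ℝ) (hs : s ≠ 0)
    (hsum : ∑ j, w j / c (Fin.rev j) = s - 1)
    (M : Matrix (Fin (n+1)) (Fin (n+1)) ℝ)
    (hM : ∀ k a, M k a = c k * (if a = Fin.rev k then 1 else 0) + w a) :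
    IsUnit M := by
  set B : Matrix (Fin (n+1)) (Fin (n+1)) ℝ :=
    fun a k => (if a = Fin.rev k then (1:ℝ) else 0) * (1 / c k)
      - w (Fin.rev k) / (s * c (Fin.rev a) * c k) with hB
  have hMB : M * B = 1 := by
    ext i k
    rw [Matrix.mul_apply, Matrix.one_apply]
    have step : ∀ j, M i j * B j k =
        (if j = Fin.rev i then (1:ℝ) else 0) * (c i * B j k)
          + (if j = Fin.rev k then (1:ℝ) else 0) * (w j * (1 / c k))
          - (w j / c (Fin.rev j)) * (w (Fin.rev k) / (s * c k)) := by
      intro j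
      rw [hM]
      simp only [hB]
      exact helper_step (c i) (c k) (c (Fin.rev j)) (w (Fin.rev k)) (w j) s
        (if j = Fin.rev i then (1:ℝ) else 0) (if j = Fin.rev k then (1:ℝ) else 0)
    rw [Finset.sum_congr rfl (fun j _ => step j)]
    rw [Finset.sum_sub_distrib, Finset.sum_add_distrib]
    simp only [boole_mul]
    rw [Fintype.sum_ite_eq' (Fin.rev i) (fun j => c i * B j k),
      Fintype.sum_ite_eq' (Fin.rev k) (fun j => w j * (1 / c k)),
      ← Finset.sum_mul, hsum]
    simp only [hB, Fin.rev_rev, Fin.rev_inj]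
    by_cases hik : i = k
    · subst hik
      simp only [eq_self_iff_true, if_true]
      exact helper_pos (c i) s (w (Fin.rev i)) (hc i) hs
    · simp only [if_neg hik]
      exact helper_neg (c i) (c k) s (w (Fin.rev k)) (hc i) (hc k) hs
  haveI := invertibleOfRightInverse M B hMB
  exact isUnit_of_invertible M

/-- if `I₀ > 0`, `N(0) ≥ 0` and `N(j) ≠ 0` for `1 ≤ j ≤ m`, then the
coefficient matrix `CoR_m` (as in Statement 15) is invertible, and for every right-hand
side `b` the linear system `M x = b` has a unique solution. -/
theorem coefficient_matrix_invertible
    (m : ℕ) (hm : 1 ≤ m) (I₀ : ℝ) (hI₀ : 0 < I₀)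
    (N : ℕ → ℝ) (hN0 : 0 ≤ N 0) (hN : ∀ j, 1 ≤ j → j ≤ m → N j ≠ 0)
    (M : Matrix (Fin (m + 1)) (Fin (m + 1)) ℝ)
    (hM : ∀ k a : Fin (m + 1), M k a =
      if (a : ℕ) = 0 then (if (k : ℕ) = m then N m else 0)
      else if (k : ℕ) = 0 ∧ (a : ℕ) = m then I₀ + N 0
      else if 1 ≤ (k : ℕ) ∧ (k : ℕ) ≤ m - 1 ∧ (a : ℕ) = m - (k : ℕ) then 2 * N (k : ℕ)
      else N (m - (a : ℕ))) :
    IsUnit M ∧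
      ∀ b : Fin (m + 1) → ℝ, ∃! x : Fin (m + 1) → ℝ, M.mulVec x = b := by
  have hI₀' : I₀ ≠ 0 := ne_of_gt hI₀
  set c : Fin (m+1) → ℝ := fun k => if (k : ℕ) = 0 then I₀ else N k with hcdef
  set w : Fin (m+1) → ℝ := fun a => if (a : ℕ) = 0 then 0 else N (m - (a : ℕ)) with hwdef
  have hklt : ∀ k : Fin (m+1), (k : ℕ) ≤ m := fun k => Nat.lt_succ_iff.mp k.isLt
  have hc : ∀ k, c k ≠ 0 := by
    intro k
    simp only [hcdef]
    split
    · exact hI₀'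
    · next h => exact hN k (Nat.one_le_iff_ne_zero.mpr h) (hklt k)
  set s : ℝ := m + N 0 / I₀ with hsdef
  have hm1 : (1:ℝ) ≤ (m:ℝ) := by exact_mod_cast hm
  have hNdiv : 0 ≤ N 0 / I₀ := div_nonneg hN0 hI₀.le
  have hs : s ≠ 0 := by
    have : (1:ℝ) ≤ s := by rw [hsdef]; linarith
    linarith
  have hrev : ∀ j : Fin (m+1), ((Fin.rev j : Fin (m+1)) : ℕ) = m - (j : ℕ) := by
    intro j; simp [Fin.val_rev]
  have hsum : ∑ j, w j / c (Fin.rev j) = s - 1 := by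
    have step : ∀ j : Fin (m+1), w j / c (Fin.rev j) =
        1 + (if j = (0 : Fin (m+1)) then (-1 : ℝ) else 0)
          + (if j = Fin.last m then N 0 / I₀ - 1 else 0) := by
      intro j
      have hj0 : (j = (0 : Fin (m+1))) ↔ (j : ℕ) = 0 := by
        rw [Fin.ext_iff]; simp
      have hjl : (j = Fin.last m) ↔ (j : ℕ) = m := by
        rw [Fin.ext_iff]; simp [Fin.last]
      by_cases h0 : (j : ℕ) = 0
      · have hne : ¬ (j : ℕ) = m := by omega
        rw [if_pos (hj0.mpr h0), if_neg (fun h => hne (hjl.mp h))]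
        simp only [hwdef, if_pos h0]
        simp
      · by_cases hl : (j : ℕ) = m
        · rw [if_neg (fun h => h0 (hj0.mp h)), if_pos (hjl.mpr hl)]
          have h1 : ((Fin.rev j : Fin (m+1)) : ℕ) = 0 := by rw [hrev]; omega
          simp only [hwdef, hcdef, if_neg h0, if_pos h1, hl]
          simp only [Nat.sub_self]
          ring
        · rw [if_neg (fun h => h0 (hj0.mp h)), if_neg (fun h => hl (hjl.mp h))]
          have h1 : ((Fin.rev j : Fin (m+1)) : ℕ) ≠ 0 := by
            rw [hrev]; have := hklt j; omega
          have h2 : ((Fin.rev j : Fin (m+1)) : ℕ) = m - (j : ℕ) := hrev j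
          simp only [hwdef, hcdef, if_neg h0, if_neg h1, h2]
          have hne : N (m - (j : ℕ)) ≠ 0 := by
            apply hN <;> omega
          rw [div_self hne]
          ring
    rw [Finset.sum_congr rfl (fun j _ => step j)]
    rw [Finset.sum_add_distrib, Finset.sum_add_distrib,
      Fintype.sum_ite_eq' (0 : Fin (m+1)) (fun _ => (-1 : ℝ)),
      Fintype.sum_ite_eq' (Fin.last m) (fun _ => N 0 / I₀ - 1)]
    simp only [Finset.sum_const, Finset.card_univ, Fintype.card_fin, nsmul_eq_mul, mul_one,
      hsdef]
    push_cast
    ring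
  have hMmatch : ∀ k a, M k a = c k * (if a = Fin.rev k then 1 else 0) + w a := by
    intro k a
    have hk := hklt k
    have ha := hklt a
    have hcond : (a = Fin.rev k) ↔ (a : ℕ) = m - (k : ℕ) := by
      rw [Fin.ext_iff, hrev]
    rw [hM]
    by_cases hA0 : (a : ℕ) = 0
    · rw [if_pos hA0]
      simp only [hwdef, if_pos hA0, add_zero]
      by_cases hKm : (k : ℕ) = m
      · have : a = Fin.rev k := hcond.mpr (by omega)
        rw [if_pos hKm, if_pos this, mul_one]
        simp only [hcdef]
        rw [if_neg (by omega), hKm]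
      · have : ¬ (a = Fin.rev k) := fun h => hKm (by have := hcond.mp h; omega)
        rw [if_neg hKm, if_neg this, mul_zero]
    · rw [if_neg hA0]
      by_cases hC1 : (k : ℕ) = 0 ∧ (a : ℕ) = m
      · have hrevc : a = Fin.rev k := hcond.mpr (by omega)
        rw [if_pos hC1, if_pos hrevc, mul_one]
        simp only [hcdef, hwdef, if_pos hC1.1, if_neg hA0, hC1.2, Nat.sub_self]
      · rw [if_neg hC1]
        by_cases hC2 : 1 ≤ (k : ℕ) ∧ (k : ℕ) ≤ m - 1 ∧ (a : ℕ) = m - (k : ℕ)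
        · have hrevc : a = Fin.rev k := hcond.mpr hC2.2.2
          rw [if_pos hC2, if_pos hrevc, mul_one]
          simp only [hcdef, hwdef, if_neg (by omega : ¬ (k : ℕ) = 0), if_neg hA0]
          have : m - (a : ℕ) = (k : ℕ) := by omega
          rw [this]; ring
        · have : ¬ (a = Fin.rev k) := by
            intro h
            have hv := hcond.mp h
            rcases Nat.eq_zero_or_pos (k : ℕ) with h0 | h1
            · exact hC1 ⟨h0, by omega⟩
            · exact hC2 ⟨h1, by omega, hv⟩
          rw [if_neg hC2, if_neg this, mul_zero, zero_add]
          simp only [hwdef, if_neg hA0]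
  have hUnit : IsUnit M := aux_antidiag_rank_one_isUnit c w hc s hs hsum M hMmatch
  refine ⟨hUnit, fun b => ?_⟩
  have hdet : IsUnit M.det := (Matrix.isUnit_iff_isUnit_det M).mp hUnit
  refine ⟨M⁻¹.mulVec b, ?_, ?_⟩
  · show M.mulVec (M⁻¹.mulVec b) = b
    rw [Matrix.mulVec_mulVec, Matrix.mul_nonsing_inv M hdet, Matrix.one_mulVec]
  · intro x hx
    have h := congrArg (M⁻¹.mulVec) hx
    rwa [Matrix.mulVec_mulVec, Matrix.nonsing_inv_mul M hdet, Matrix.one_mulVec] at h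
end

section
/- Let A ≥ 1 and w ≥ 1 be integers and N : {w, w+1, …, A+w} → ℝ with N(j) ≥ 0 for all j. Define the (A+1)×(A+1) real matrix M′, with rows and columns indexed by k, a ∈ {0,…,A}, by: M′(k,0) = N(A+w) if k = A and M′(k,0) = 0 if k < A; for 1 ≤ a ≤ A, M′(k,a) = N(A+w−a), except that, for 0 ≤ k ≤ A−1, M′(k, A−k) = 2 N(w+k). Then |det M′| = (A+1) · ∏_{j=0}^{A} N(w+j); in particular, if N(w+j) ≠ 0 for all j ∈ {0,…,A}, then M′ is invertible and for every b ∈ ℝ^{A+1} the system M′ x = b has a unique solution. -/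
open Finset

section Aux

/-- auxiliary: the scaling coefficients -/
private def auxc (A w : ℕ) (N : ℕ → ℝ) : Fin (A + 1) → ℝ := fun a => N (A + w - (a : ℕ))

/-- auxiliary: the combinatorial matrix -/
private def auxB (A : ℕ) : Matrix (Fin (A + 1)) (Fin (A + 1)) ℝ :=
  Matrix.of fun k a =>
    (if 1 ≤ (a : ℕ) then (1 : ℝ) else 0) + (if (a : ℕ) = A - (k : ℕ) then 1 else 0)

/-- auxiliary: the reversal matrix -/
private def auxP (A : ℕ) : Matrix (Fin (A + 1)) (Fin (A + 1)) ℝ :=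
  Matrix.of fun k j => if (j : ℕ) = A - (k : ℕ) then (1 : ℝ) else 0

/-- auxiliary: identity plus rank one -/
private def auxC (A : ℕ) : Matrix (Fin (A + 1)) (Fin (A + 1)) ℝ :=
  1 + Matrix.replicateCol Unit (fun _ => (1 : ℝ)) *
    Matrix.replicateRow Unit (fun a : Fin (A + 1) => if 1 ≤ (a : ℕ) then (1 : ℝ) else 0)

private lemma auxP_mul (A : ℕ) (M : Matrix (Fin (A + 1)) (Fin (A + 1)) ℝ)
    (k a : Fin (A + 1)) :
    (auxP A * M) k a = M ⟨A - (k : ℕ), by omega⟩ a := by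
  have hk : (k : ℕ) ≤ A := Nat.lt_succ_iff.mp k.isLt
  rw [Matrix.mul_apply]
  set j₀ : Fin (A + 1) := ⟨A - (k : ℕ), by omega⟩ with hj₀
  have hcond : ∀ j : Fin (A + 1), ((j : ℕ) = A - (k : ℕ)) ↔ j = j₀ := by
    intro j; rw [Fin.ext_iff]
  have hterm : ∀ j : Fin (A + 1), auxP A k j * M j a = if j = j₀ then M j a else 0 := by
    intro j
    simp only [auxP, Matrix.of_apply, hcond j]
    split_ifs <;> ring
  rw [Finset.sum_congr rfl fun j _ => hterm j, Finset.sum_ite_eq' Finset.univ j₀]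
  simp

private lemma auxP_mul_self (A : ℕ) : auxP A * auxP A = 1 := by
  ext k a
  have hk : (k : ℕ) ≤ A := Nat.lt_succ_iff.mp k.isLt
  rw [auxP_mul]
  simp only [auxP, Matrix.of_apply, Matrix.one_apply]
  have h : ((a : ℕ) = A - (A - (k : ℕ))) ↔ (k = a) := by
    rw [Fin.ext_iff]; omega
  simp only [h]

private lemma auxC_apply (A : ℕ) (j a : Fin (A + 1)) :
    auxC A j a = (if j = a then (1 : ℝ) else 0) + (if 1 ≤ (a : ℕ) then (1 : ℝ) else 0) := by
  simp only [auxC, Matrix.add_apply, Matrix.one_apply, Matrix.mul_apply, Matrix.replicateCol_apply,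
    Matrix.replicateRow_apply, Finset.univ_unique, Finset.sum_singleton, one_mul]

private lemma auxB_eq (A : ℕ) : auxB A = auxP A * auxC A := by
  ext k a
  have hk : (k : ℕ) ≤ A := Nat.lt_succ_iff.mp k.isLt
  rw [auxP_mul, auxC_apply]
  simp only [auxB, Matrix.of_apply]
  have h : ((⟨A - (k : ℕ), by omega⟩ : Fin (A + 1)) = a) ↔ ((a : ℕ) = A - (k : ℕ)) := by
    rw [Fin.ext_iff]; exact eq_comm
  simp only [h]
  ring

end Aux

/-- determinant and invertibility of the coefficient matrix of the linear
system (5.12) for the reproductive powers `R(t₀+A+w, a)`, `a = 0,…,A`: with rows/columns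
indexed by `k, a ∈ {0,…,A}`,
`M′(k,0) = N(A+w)` if `k = A` and `0` otherwise; for `1 ≤ a ≤ A`, `M′(k,a) = N(A+w−a)`
except `M′(k, A−k) = 2 N(w+k)` for `0 ≤ k ≤ A−1`.
Then `|det M′| = (A+1) ∏_{j=0}^{A} N(w+j)`; in particular, if `N(w+j) ≠ 0` for all
`j ∈ {0,…,A}`, then `M′` is invertible and every system `M′ x = b` has a unique solution. -/
theorem coefficient_matrix_det_late_times
    (A w : ℕ) (hA : 1 ≤ A) (hw : 1 ≤ w)
    (N : ℕ → ℝ) (hN : ∀ j, w ≤ j → j ≤ A + w → 0 ≤ N j)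
    (M' : Matrix (Fin (A + 1)) (Fin (A + 1)) ℝ)
    (hM' : ∀ k a : Fin (A + 1), M' k a =
      if (a : ℕ) = 0 then (if (k : ℕ) = A then N (A + w) else 0)
      else if (k : ℕ) ≤ A - 1 ∧ (a : ℕ) = A - (k : ℕ) then 2 * N (w + (k : ℕ))
      else N (A + w - (a : ℕ))) :
    |M'.det| = ((A : ℝ) + 1) * ∏ j ∈ Finset.range (A + 1), N (w + j) ∧
      ((∀ j ≤ A, N (w + j) ≠ 0) →
        IsUnit M' ∧
          ∀ b : Fin (A + 1) → ℝ, ∃! x : Fin (A + 1) → ℝ, M'.mulVec x = b) := by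
  -- Step 1: factor `M' = of fun k a => c a * B k a`
  have hfac : M' = Matrix.of (fun k a => auxc A w N a * auxB A k a) := by
    ext k a
    have hk : (k : ℕ) ≤ A := Nat.lt_succ_iff.mp k.isLt
    have ha : (a : ℕ) ≤ A := Nat.lt_succ_iff.mp a.isLt
    rw [hM' k a]
    simp only [Matrix.of_apply, auxc, auxB]
    by_cases h0 : (a : ℕ) = 0
    · by_cases hkA : (k : ℕ) = A
      · rw [if_pos h0, if_pos hkA, if_neg (show ¬ 1 ≤ (a : ℕ) from by omega),
          if_pos (show (a : ℕ) = A - (k : ℕ) from by omega),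
          show A + w - (a : ℕ) = A + w from by omega]
        ring
      · rw [if_pos h0, if_neg hkA, if_neg (show ¬ 1 ≤ (a : ℕ) from by omega),
          if_neg (show ¬ (a : ℕ) = A - (k : ℕ) from by omega)]
        ring
    · by_cases hsp : (k : ℕ) ≤ A - 1 ∧ (a : ℕ) = A - (k : ℕ)
      · have h2 := hsp.2
        rw [if_neg h0, if_pos hsp, if_pos (show 1 ≤ (a : ℕ) from by omega), if_pos h2,
          show A + w - (a : ℕ) = w + (k : ℕ) from by omega]
        ring
      · rw [if_neg h0, if_neg hsp, if_pos (show 1 ≤ (a : ℕ) from by omega),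
          if_neg (show ¬ (a : ℕ) = A - (k : ℕ) from fun h => hsp ⟨by omega, h⟩)]
        ring
  -- Step 2: determinant of B
  have hdetB : |(auxB A).det| = (A : ℝ) + 1 := by
    have hPP : (auxP A).det * (auxP A).det = 1 := by
      rw [← Matrix.det_mul, auxP_mul_self, Matrix.det_one]
    have habsP : |(auxP A).det| = 1 := by
      rcases mul_self_eq_one_iff.mp hPP with h | h <;> rw [h] <;> norm_num
    have hsum : (∑ a : Fin (A + 1), if 1 ≤ (a : ℕ) then (1 : ℝ) else 0) = A := by
      have hterm : ∀ a : Fin (A + 1), (if 1 ≤ (a : ℕ) then (1 : ℝ) else 0)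
          = 1 - (if a = 0 then 1 else 0) := by
        intro a
        by_cases h : a = 0
        · have : ¬ (1 ≤ (a : ℕ)) := by simp [h]
          rw [if_neg this, if_pos h]; ring
        · have h' : (a : ℕ) ≠ 0 := fun hh => h (Fin.ext hh)
          rw [if_pos (by omega), if_neg h]; ring
      rw [Finset.sum_congr rfl fun a _ => hterm a, Finset.sum_sub_distrib]
      simp [Finset.card_univ]
    have hdetC : (auxC A).det = (A : ℝ) + 1 := by
      rw [auxC, Matrix.det_one_add_replicateCol_mul_replicateRow]
      simp only [dotProduct, mul_one]
      rw [hsum]; ring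
    rw [auxB_eq, Matrix.det_mul, abs_mul, habsP, hdetC, one_mul,
      abs_of_nonneg (by positivity)]
  -- Step 3: product of coefficients
  have hprod : (∏ a : Fin (A + 1), auxc A w N a) = ∏ j ∈ Finset.range (A + 1), N (w + j) := by
    have h1 : (∏ a : Fin (A + 1), auxc A w N a)
        = ∏ a : Fin (A + 1), N (w + ((Fin.rev a : Fin (A + 1)) : ℕ)) := by
      refine Finset.prod_congr rfl fun a _ => ?_
      have ha : (a : ℕ) ≤ A := Nat.lt_succ_iff.mp a.isLt
      have hv : ((Fin.rev a : Fin (A + 1)) : ℕ) = A - (a : ℕ) := by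
        simp [Fin.rev]
      rw [hv, auxc]
      congr 1
      omega
    have h2 : (∏ a : Fin (A + 1), N (w + ((Fin.rev a : Fin (A + 1)) : ℕ)))
        = ∏ b : Fin (A + 1), N (w + (b : ℕ)) :=
      Fintype.prod_equiv Fin.revPerm _ _ (fun a => rfl)
    rw [h1, h2]
    exact Fin.prod_univ_eq_prod_range (fun j => N (w + j)) (A + 1)
  -- Step 4: |det M'|
  have hnn : 0 ≤ ∏ j ∈ Finset.range (A + 1), N (w + j) := by
    apply Finset.prod_nonneg
    intro j hj
    exact hN _ (by omega) (by simp at hj; omega)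
  have hdet : |M'.det| = ((A : ℝ) + 1) * ∏ j ∈ Finset.range (A + 1), N (w + j) := by
    rw [hfac, Matrix.det_mul_row, abs_mul, hdetB, hprod, abs_of_nonneg hnn]
    ring
  refine ⟨hdet, fun hne => ?_⟩
  have hdet_ne : M'.det ≠ 0 := by
    intro h
    rw [h, abs_zero] at hdet
    have h1 : ∏ j ∈ Finset.range (A + 1), N (w + j) ≠ 0 :=
      Finset.prod_ne_zero_iff.mpr fun j hj => hne j (by simp at hj; omega)
    have h2 : ((A : ℝ) + 1) ≠ 0 := by positivity
    exact (mul_ne_zero h2 h1) hdet.symm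
  have hunit : IsUnit M'.det := isUnit_iff_ne_zero.mpr hdet_ne
  refine ⟨(Matrix.isUnit_iff_isUnit_det M').mpr hunit, fun b => ?_⟩
  refine ⟨M'⁻¹.mulVec b, ?_, ?_⟩
  · show M'.mulVec (M'⁻¹.mulVec b) = b
    rw [Matrix.mulVec_mulVec, Matrix.mul_nonsing_inv _ hunit, Matrix.one_mulVec]
  · intro y hy
    calc y = (1 : Matrix (Fin (A+1)) (Fin (A+1)) ℝ).mulVec y := (Matrix.one_mulVec y).symm
    _ = (M'⁻¹ * M').mulVec y := by rw [Matrix.nonsing_inv_mul _ hunit]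
    _ = M'⁻¹.mulVec b := by rw [← Matrix.mulVec_mulVec, hy]
end
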